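/- arXiv:1512.04699 — 4 statements merged into one kernel-verified Lean document; each statement's English description precedes it below -/
import Mathlib

section
/- Assume σ < σ₀(Ω) < 0. Then for every u ∈ H^{1,2}(Ω) with ∫_Ω |∇u|² dx = 1 (not necessarily satisfying the constraint a(u,1) = 0) one has 1/λ₁(σ) ≥ a(u,u), i.e. ∫_Ω u² dx + σ ∮_{∂Ω} u² dS ≤ 1/λ₁(σ). -/
/-!
STATEMENT 3: If σ < σ₀(Ω) < 0, then for every u ∈ H^{1,2}(Ω) normalized by
∫_Ω |∇u|² dx = 1 (not necessarily satisfying a(u,1) = 0) one has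
a(u,u) = ∫_Ω u² dx + σ ∮_{∂Ω} u² dS ≤ 1/λ₁(σ).
(The surface measure S on ∂Ω is given as data; λ₁(σ) > 0 and the sup defining it is
finite, as is guaranteed for σ < σ₀(Ω).)
-/

open MeasureTheory Metric Set

noncomputable section

abbrev En (n : ℕ) := EuclideanSpace ℝ (Fin n)

/-- The bilinear form a(u,v) = ∫_Ω u v dx + σ ∮_{∂Ω} u v dS. -/
def aForm {n : ℕ} (Ω : Set (En n)) (S : Measure (En n)) (σ : ℝ)
    (u v : En n → ℝ) : ℝ :=
  (∫ x in Ω, u x * v x) + σ * ∫ x in frontier Ω, u x * v x ∂S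

/-- Membership in the Sobolev class H^{1,2}(Ω) with L²(∂Ω) trace. -/
def MemH12 {n : ℕ} (Ω : Set (En n)) (S : Measure (En n)) (u : En n → ℝ) : Prop :=
  MemLp u 2 (volume.restrict Ω) ∧
  MemLp (fun x => ‖fderiv ℝ u x‖) 2 (volume.restrict Ω) ∧
  MemLp u 2 (S.restrict (frontier Ω))

/-- The constraint set K = {u ∈ H^{1,2}(Ω) : ∫_Ω |∇u|² dx = 1, a(u,1) = 0}. -/
def Kset {n : ℕ} (Ω : Set (En n)) (S : Measure (En n)) (σ : ℝ) : Set (En n → ℝ) :=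
  {u | MemH12 Ω S u ∧ (∫ x in Ω, ‖fderiv ℝ u x‖ ^ 2) = 1 ∧
    aForm Ω S σ u (fun _ => 1) = 0}

/-- The set of values {a(u,u) : u ∈ K}. -/
def rayleighVals {n : ℕ} (Ω : Set (En n)) (S : Measure (En n)) (σ : ℝ) : Set ℝ :=
  (fun u => aForm Ω S σ u u) '' Kset Ω S σ

/-- λ₁(σ) = 1 / sup_{u ∈ K} a(u,u), the smallest positive eigenvalue. -/
def lam1 {n : ℕ} (Ω : Set (En n)) (S : Measure (En n)) (σ : ℝ) : ℝ :=
  1 / sSup (rayleighVals Ω S σ)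

/-- λ₋₁(σ) = 1 / inf_{u ∈ K} a(u,u), the largest negative eigenvalue. -/
def lamNeg1 {n : ℕ} (Ω : Set (En n)) (S : Measure (En n)) (σ : ℝ) : ℝ :=
  1 / sInf (rayleighVals Ω S σ)

/-- σ₀(Ω) = −|Ω|/|∂Ω|. -/
def sigma0 {n : ℕ} (Ω : Set (En n)) (S : Measure (En n)) : ℝ :=
  -(volume Ω).toReal / (S (frontier Ω)).toReal

/-- |∂B_r|: the surface area of the sphere of radius r in ℝⁿ, n·|B_r|/r. -/
def sphereArea (n : ℕ) (r : ℝ) : ℝ :=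
  (n : ℝ) * (volume (Metric.ball (0 : En n) r)).toReal / r


lemma expand_sq {α : Type*} {m : MeasurableSpace α} (μ : Measure α) [IsFiniteMeasure μ]
    (u : α → ℝ) (c : ℝ) (h1 : Integrable (fun x => u x * u x) μ) (h2 : Integrable u μ) :
    ∫ x, (u x - c) * (u x - c) ∂μ
      = (∫ x, u x * u x ∂μ) - 2 * c * (∫ x, u x ∂μ) + c * c * (μ Set.univ).toReal := by
  have hpt : (fun x => (u x - c) * (u x - c))
      = fun x => (u x * u x - (2 * c) * u x) + c * c := funext fun x => by ring
  rw [hpt]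
  have hadd : ∫ x, ((u x * u x - (2 * c) * u x) + c * c) ∂μ
      = (∫ x, (u x * u x - (2 * c) * u x) ∂μ) + ∫ _x, (c * c : ℝ) ∂μ :=
    integral_add (h1.sub (h2.const_mul _)) (integrable_const _)
  have hsub : ∫ x, (u x * u x - (2 * c) * u x) ∂μ
      = (∫ x, u x * u x ∂μ) - ∫ x, (2 * c) * u x ∂μ :=
    integral_sub h1 (h2.const_mul _)
  rw [hadd, hsub, integral_const_mul, integral_const]
  simp [smul_eq_mul, Measure.real]; ring

lemma expand_lin {α : Type*} {m : MeasurableSpace α} (μ : Measure α) [IsFiniteMeasure μ]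
    (u : α → ℝ) (c : ℝ) (h2 : Integrable u μ) :
    ∫ x, (u x - c) * 1 ∂μ = (∫ x, u x ∂μ) - c * (μ Set.univ).toReal := by
  simp_rw [mul_one]
  rw [integral_sub h2 (integrable_const _), integral_const]
  simp [smul_eq_mul, mul_comm, Measure.real]

theorem aForm_le_inv_lam1 {n : ℕ} (hn : 2 ≤ n)
    (Ω : Set (En n)) (hΩopen : IsOpen Ω) (hΩconn : IsConnected Ω)
    (hΩbdd : Bornology.IsBounded Ω)
    (S : Measure (En n))
    (σ : ℝ) (hσ : σ < sigma0 Ω S) (hσ0 : sigma0 Ω S < 0)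
    (hbdd : BddAbove (rayleighVals Ω S σ)) (hne : (rayleighVals Ω S σ).Nonempty)
    (hpos : 0 < lam1 Ω S σ)
    (u : En n → ℝ) (hu : MemH12 Ω S u)
    (hnorm : (∫ x in Ω, ‖fderiv ℝ u x‖ ^ 2) = 1) :
    aForm Ω S σ u u ≤ 1 / lam1 Ω S σ := by
  classical
  obtain ⟨hu1, hu2, hu3⟩ := hu
  set VO : ℝ := (volume Ω).toReal with hVO
  set Vb : ℝ := (S (frontier Ω)).toReal with hVb
  -- positivity / finiteness facts from hσ0
  have hVb_pos : 0 < Vb := by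
    rcases lt_or_ge 0 Vb with h | h
    · exact h
    · exfalso
      have hVb0 : Vb = 0 := le_antisymm h ENNReal.toReal_nonneg
      rw [sigma0] at hσ0
      rw [← hVb, hVb0, div_zero] at hσ0
      exact lt_irrefl _ hσ0
  have hVO_pos : 0 < VO := by
    rw [sigma0] at hσ0
    rw [← hVb, ← hVO] at hσ0
    have := (div_neg_iff.mp hσ0)
    rcases this with ⟨h1, h2⟩ | ⟨h1, h2⟩
    · linarith
    · linarith
  have hSfin : S (frontier Ω) ≠ ⊤ := by
    intro h
    rw [hVb, h] at hVb_pos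
    simp at hVb_pos
  haveI : IsFiniteMeasure (volume.restrict Ω : Measure (En n)) :=
    ⟨by rw [Measure.restrict_apply_univ]; exact hΩbdd.measure_lt_top⟩
  haveI : IsFiniteMeasure (S.restrict (frontier Ω)) :=
    ⟨by rw [Measure.restrict_apply_univ]; exact lt_top_iff_ne_top.mpr hSfin⟩
  -- integrability
  have huuO : Integrable (fun x => u x * u x) (volume.restrict Ω) := by
    simpa [pow_two] using hu1.integrable_sq
  have huO : Integrable u (volume.restrict Ω) := hu1.integrable one_le_two
  have huub : Integrable (fun x => u x * u x) (S.restrict (frontier Ω)) := by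
    simpa [pow_two] using hu3.integrable_sq
  have hub : Integrable u (S.restrict (frontier Ω)) := hu3.integrable one_le_two
  -- a(1,1) and a(u,1)
  set A1 : ℝ := VO + σ * Vb with hA1
  have hA1neg : A1 < 0 := by
    rw [sigma0, ← hVb, ← hVO] at hσ
    have : σ * Vb < -VO := by
      have := (lt_div_iff₀ hVb_pos).mp hσ
      linarith
    rw [hA1]; linarith
  have hA1ne : A1 ≠ 0 := ne_of_lt hA1neg
  set B : ℝ := (∫ x in Ω, u x) + σ * ∫ x in frontier Ω, u x ∂S with hB
  have hau1 : aForm Ω S σ u (fun _ => 1) = B := by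
    simp [aForm, hB]
  set c : ℝ := B / A1 with hc
  have hcA1 : c * A1 = B := div_mul_cancel₀ B hA1ne
  set v : En n → ℝ := fun x => u x - c with hv
  -- expansions
  have hvvO : ∫ x in Ω, v x * v x
      = (∫ x in Ω, u x * u x) - 2 * c * (∫ x in Ω, u x) + c * c * VO := by
    have := expand_sq (volume.restrict Ω) u c huuO huO
    rw [Measure.restrict_apply_univ] at this
    exact this
  have hvvb : ∫ x in frontier Ω, v x * v x ∂S
      = (∫ x in frontier Ω, u x * u x ∂S) - 2 * c * (∫ x in frontier Ω, u x ∂S)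
        + c * c * Vb := by
    have := expand_sq (S.restrict (frontier Ω)) u c huub hub
    rw [Measure.restrict_apply_univ] at this
    exact this
  have hv1O : ∫ x in Ω, v x * 1 = (∫ x in Ω, u x) - c * VO := by
    have := expand_lin (volume.restrict Ω) u c huO
    rw [Measure.restrict_apply_univ] at this
    exact this
  have hv1b : ∫ x in frontier Ω, v x * 1 ∂S
      = (∫ x in frontier Ω, u x ∂S) - c * Vb := by
    have := expand_lin (S.restrict (frontier Ω)) u c hub
    rw [Measure.restrict_apply_univ] at this
    exact this
  -- a(v,v) and a(v,1)
  have havv : aForm Ω S σ v v = aForm Ω S σ u u - 2 * c * B + c * c * A1 := by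
    rw [aForm, aForm, hvvO, hvvb, hB, hA1]; ring
  have hav1 : aForm Ω S σ v (fun _ => 1) = 0 := by
    rw [aForm, hv1O, hv1b]
    have : B - c * A1 = 0 := by rw [hcA1]; ring
    rw [hB, hA1] at this
    linarith [this]
  -- v ∈ K
  have hfd : (fun x => ‖fderiv ℝ v x‖) = fun x => ‖fderiv ℝ u x‖ :=
    funext fun x => by rw [hv]; rw [fderiv_sub_const]
  have hvK : v ∈ Kset Ω S σ := by
    have hfd' : ∀ x, fderiv ℝ v x = fderiv ℝ u x := fun x => fderiv_sub_const c
    refine ⟨⟨hu1.sub (memLp_const c), ?_, hu3.sub (memLp_const c)⟩, ?_, hav1⟩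
    · rw [hfd]; exact hu2
    · simp_rw [hfd']; exact hnorm
  have hmem : aForm Ω S σ v v ∈ rayleighVals Ω S σ := ⟨v, hvK, rfl⟩
  -- comparison
  have hcc : c * c * A1 = c * B := by rw [mul_assoc, hcA1]
  have hle : aForm Ω S σ u u ≤ aForm Ω S σ v v := by
    rw [havv, hcc]
    have hcB : c * B ≤ 0 := by
      rw [hc, div_mul_eq_mul_div]
      exact div_nonpos_of_nonneg_of_nonpos (mul_self_nonneg B) (le_of_lt hA1neg)
    linarith
  have hsSup : aForm Ω S σ v v ≤ sSup (rayleighVals Ω S σ) := le_csSup hbdd hmem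
  have hsup_pos : 0 < sSup (rayleighVals Ω S σ) := by
    rw [lam1] at hpos
    exact one_div_pos.mp hpos
  have : 1 / lam1 Ω S σ = sSup (rayleighVals Ω S σ) := by
    rw [lam1, one_div_one_div]
  rw [this]
  exact le_trans hle hsSup


end
end

section
/- Assume σ₀(Ω) < σ < 0. Then for every u ∈ H^{1,2}(Ω) with ∫_Ω |∇u|² dx = 1 (not necessarily satisfying the constraint a(u,1) = 0) one has 1/λ₋₁(σ) ≤ a(u,u), i.e. ∫_Ω u² dx + σ ∮_{∂Ω} u² dS ≥ 1/λ₋₁(σ). -/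
/-!
STATEMENT 4: If σ₀(Ω) < σ < 0, then for every u ∈ H^{1,2}(Ω) normalized by
∫_Ω |∇u|² dx = 1 (not necessarily satisfying a(u,1) = 0) one has
a(u,u) = ∫_Ω u² dx + σ ∮_{∂Ω} u² dS ≥ 1/λ₋₁(σ).
(The surface measure S on ∂Ω is given as data; λ₋₁(σ) < 0 and the inf defining it is
finite, as is guaranteed for σ₀(Ω) < σ < 0.)
-/

open MeasureTheory Metric Set

noncomputable section

lemma expand_integral {α : Type*} [MeasurableSpace α] {μ : Measure α} [IsFiniteMeasure μ]
    {u : α → ℝ} (hu : MemLp u 2 μ) (c : ℝ) :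
    ∫ x, (u x - c) * (u x - c) ∂μ
      = (∫ x, u x * u x ∂μ) - 2 * c * (∫ x, u x ∂μ) + c * c * (μ Set.univ).toReal := by
  have h1 : Integrable (fun x => u x * u x) μ := by
    have := hu.integrable_sq
    simpa [pow_two] using this
  have h2 : Integrable u μ := hu.integrable one_le_two
  have heq : ∀ x, (u x - c) * (u x - c) = u x * u x - (2 * c) * u x + c * c := by
    intro x; ring
  have hmul : Integrable (fun x => 2 * c * u x) μ := h2.const_mul _
  have hsub : Integrable (fun x => u x * u x - 2 * c * u x) μ := h1.sub hmul
  simp_rw [heq]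
  rw [integral_add hsub (integrable_const _), integral_sub h1 hmul,
    integral_const_mul, integral_const]
  simp [smul_eq_mul, Measure.real]; ring

lemma expand_integral_one {α : Type*} [MeasurableSpace α] {μ : Measure α} [IsFiniteMeasure μ]
    {u : α → ℝ} (hu : MemLp u 2 μ) (c : ℝ) :
    ∫ x, (u x - c) ∂μ = (∫ x, u x ∂μ) - c * (μ Set.univ).toReal := by
  have h2 : Integrable u μ := hu.integrable one_le_two
  rw [integral_sub h2 (integrable_const _), integral_const]
  simp [smul_eq_mul, mul_comm, Measure.real]

theorem aForm_ge_inv_lamNeg1 {n : ℕ} (hn : 2 ≤ n)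
    (Ω : Set (En n)) (hΩopen : IsOpen Ω) (hΩconn : IsConnected Ω)
    (hΩbdd : Bornology.IsBounded Ω)
    (S : Measure (En n))
    (σ : ℝ) (hσ0 : sigma0 Ω S < σ) (hσ : σ < 0)
    (hbdd : BddBelow (rayleighVals Ω S σ)) (hne : (rayleighVals Ω S σ).Nonempty)
    (hneg : lamNeg1 Ω S σ < 0)
    (u : En n → ℝ) (hu : MemH12 Ω S u)
    (hnorm : (∫ x in Ω, ‖fderiv ℝ u x‖ ^ 2) = 1) :
    1 / lamNeg1 Ω S σ ≤ aForm Ω S σ u u := by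
  classical
  -- basic positivity facts
  have hσ0neg : sigma0 Ω S < 0 := hσ0.trans hσ
  have hfacts : 0 < (volume Ω).toReal ∧ 0 < (S (frontier Ω)).toReal := by
    unfold sigma0 at hσ0neg
    rcases div_neg_iff.mp hσ0neg with ⟨h1, h2⟩ | ⟨h1, h2⟩
    · exact absurd h2 (not_lt.2 ENNReal.toReal_nonneg)
    · exact ⟨by linarith, h2⟩
  set m : ℝ := (volume Ω).toReal with hm
  set s : ℝ := (S (frontier Ω)).toReal with hs
  have hmpos : 0 < m := hfacts.1
  have hspos : 0 < s := hfacts.2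
  have hSfin : S (frontier Ω) < ⊤ := (ENNReal.toReal_pos_iff.mp hfacts.2).2
  haveI hfinμ : IsFiniteMeasure (volume.restrict Ω) :=
    ⟨by rw [Measure.restrict_apply_univ]; exact hΩbdd.measure_lt_top⟩
  haveI hfinν : IsFiniteMeasure (S.restrict (frontier Ω)) :=
    ⟨by rw [Measure.restrict_apply_univ]; exact hSfin⟩
  -- a(1,1) > 0
  set a11 : ℝ := m + σ * s with ha11def
  have ha11pos : 0 < a11 := by
    have : -m / s < σ := by
      have : sigma0 Ω S = -m / s := by rw [sigma0, hm, hs]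
      linarith [this ▸ hσ0]
    have := (div_lt_iff₀ hspos).mp this
    rw [ha11def]; nlinarith
  have ha11ne : a11 ≠ 0 := ne_of_gt ha11pos
  -- shorthand
  set J1 : ℝ := ∫ x in Ω, u x with hJ1
  set J2 : ℝ := ∫ x in frontier Ω, u x ∂S with hJ2
  have hau1 : aForm Ω S σ u (fun _ => 1) = J1 + σ * J2 := by
    simp [aForm, hJ1, hJ2]
  set c : ℝ := (J1 + σ * J2) / a11 with hc
  set v : En n → ℝ := fun x => u x - c with hv
  -- gradient of v equals gradient of u
  have hgrad : ∀ x, fderiv ℝ v x = fderiv ℝ u x := fun x => fderiv_sub_const c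
  -- measure totals
  have hμuniv : ((volume.restrict Ω) Set.univ).toReal = m := by
    rw [Measure.restrict_apply_univ]
  have hνuniv : ((S.restrict (frontier Ω)) Set.univ).toReal = s := by
    rw [Measure.restrict_apply_univ]
  -- expansions
  have hE1 := expand_integral hu.1 c
  have hE2 := expand_integral hu.2.2 c
  have hF1 := expand_integral_one hu.1 c
  have hF2 := expand_integral_one hu.2.2 c
  rw [hμuniv] at hE1 hF1
  rw [hνuniv] at hE2 hF2
  -- a(v,1) = 0
  have hav1 : aForm Ω S σ v (fun _ => 1) = 0 := by
    have : aForm Ω S σ v (fun _ => 1)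
        = (J1 + σ * J2) - c * a11 := by
      simp only [aForm, hv, mul_one]
      rw [hF1, hF2, hJ1, hJ2, ha11def]; ring
    rw [this, hc, div_mul_cancel₀ _ ha11ne]; ring
  -- a(v,v) ≤ a(u,u)
  have havv : aForm Ω S σ v v
      = aForm Ω S σ u u - 2 * c * (J1 + σ * J2) + c * c * a11 := by
    simp only [aForm, hv]
    rw [hE1, hE2, hJ1, hJ2, ha11def]; ring
  have hkey : aForm Ω S σ v v = aForm Ω S σ u u - (J1 + σ * J2) ^ 2 / a11 := by
    rw [havv, hc]; field_simp; ring
  have hle : aForm Ω S σ v v ≤ aForm Ω S σ u u := by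
    rw [hkey]
    exact sub_le_self _ (div_nonneg (sq_nonneg _) ha11pos.le)
  -- v ∈ K
  have hvK : v ∈ Kset Ω S σ := by
    refine ⟨⟨hu.1.sub (memLp_const c), ?_, hu.2.2.sub (memLp_const c)⟩, ?_, hav1⟩
    · have : (fun x => ‖fderiv ℝ v x‖) = fun x => ‖fderiv ℝ u x‖ := by
        funext x; rw [hgrad x]
      rw [this]; exact hu.2.1
    · have : (fun x => ‖fderiv ℝ v x‖ ^ 2) = fun x => ‖fderiv ℝ u x‖ ^ 2 := by
        funext x; rw [hgrad x]
      calc (∫ x in Ω, ‖fderiv ℝ v x‖ ^ 2) = ∫ x in Ω, ‖fderiv ℝ u x‖ ^ 2 := by rw [this]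
        _ = 1 := hnorm
  have hmem : aForm Ω S σ v v ∈ rayleighVals Ω S σ := ⟨v, hvK, rfl⟩
  have hinf : sInf (rayleighVals Ω S σ) ≤ aForm Ω S σ u u :=
    (csInf_le hbdd hmem).trans hle
  have : 1 / lamNeg1 Ω S σ = sInf (rayleighVals Ω S σ) := by
    rw [lamNeg1, one_div_one_div]
  rw [this]; exact hinf


end
end

section
/- Let n ≥ 2, R > 0, λ > 0 and σ < 0. Suppose u ∈ C²([0,R]) is strictly positive on [0,R] and satisfies the radial eigenvalue equation u''(r) + ((n−1)/r) u'(r) + λ u(r) = 0 on (0,R), with u'(0) = 0 and the boundary condition u'(R) = λσ u(R). Then λ²σ² + ((n−1)/R) λσ + λ > 0; equivalently, k(R) := λ u(R)(1 + (n−1)σ/R + λσ²) > 0. -/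
/-!
STATEMENT 13 (Lemma `kr`, case λ = λ₁ > 0): Let n ≥ 2, R > 0, λ > 0, σ < 0.  If
u ∈ C²([0,R]) is strictly positive on [0,R], solves
u'' + ((n−1)/r) u' + λu = 0 on (0,R) with u'(0) = 0 and u'(R) = λσ u(R), then
λ²σ² + ((n−1)/R)·λσ + λ > 0; equivalently k(R) = λ u(R)(1 + (n−1)σ/R + λσ²) > 0.
-/

theorem radial_eigenfunction_kR_pos (n : ℕ) (hn : 2 ≤ n)
    (R lam σ : ℝ) (hR : 0 < R) (hlam : 0 < lam) (hσ : σ < 0)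
    (u : ℝ → ℝ) (hu : ContDiffOn ℝ 2 u (Set.Icc 0 R))
    (hpos : ∀ r ∈ Set.Icc (0 : ℝ) R, 0 < u r)
    (hode : ∀ r ∈ Set.Ioo (0 : ℝ) R,
      deriv (deriv u) r + ((n : ℝ) - 1) / r * deriv u r + lam * u r = 0)
    (h0 : deriv u 0 = 0)
    (hbc : deriv u R = lam * σ * u R) :
    0 < lam ^ 2 * σ ^ 2 + ((n : ℝ) - 1) / R * (lam * σ) + lam ∧
    0 < lam * u R * (1 + ((n : ℝ) - 1) * σ / R + lam * σ ^ 2) := by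
  obtain ⟨m, rfl⟩ : ∃ m, n = m + 2 := ⟨n - 2, by omega⟩
  have hRmem : R ∈ Set.Icc (0:ℝ) R := Set.right_mem_Icc.2 hR.le
  have huR : 0 < u R := hpos R hRmem
  set g : ℝ → ℝ := derivWithin u (Set.Icc 0 R) with hgdef
  -- g agrees with deriv u on Ioo
  have hgIoo : ∀ r ∈ Set.Ioo (0:ℝ) R, g r = deriv u r := fun r hr =>
    derivWithin_of_mem_nhds (Icc_mem_nhds hr.1 hr.2)
  -- at R, u is differentiable (deriv ≠ 0) and g R = deriv u R
  have hdR : deriv u R ≠ 0 := by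
    rw [hbc]
    have : lam * σ * u R < 0 := mul_neg_of_neg_of_pos (mul_neg_of_pos_of_neg hlam hσ) huR
    linarith
  have hgR : g R = deriv u R :=
    (differentiableAt_of_deriv_ne_zero hdR).derivWithin
      (uniqueDiffOn_Icc hR R hRmem)
  -- continuity of g on Icc
  have hgcont : ContinuousOn g (Set.Icc 0 R) :=
    hu.continuousOn_derivWithin (uniqueDiffOn_Icc hR) one_le_two
  have hucont : ContinuousOn u (Set.Icc 0 R) := hu.continuousOn
  -- the auxiliary function
  set Q : ℝ → ℝ := fun r =>
    r ^ (m + 2) * (g r) ^ 2 + ((m : ℝ) + 1) * r ^ (m + 1) * u r * g r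
      + lam * r ^ (m + 2) * (u r) ^ 2 with hQdef
  have hQcont : ContinuousOn Q (Set.Icc 0 R) := by
    apply ContinuousOn.add
    apply ContinuousOn.add
    · exact (continuousOn_pow _).mul (hgcont.pow 2)
    · exact ((continuousOn_const.mul (continuousOn_pow _)).mul hucont).mul hgcont
    · exact (continuousOn_const.mul (continuousOn_pow _)).mul (hucont.pow 2)
  -- derivative of second-order data
  have hderiv2 : ContDiffOn ℝ 1 (deriv u) (Set.Ioo 0 R) := by
    have := (hu.mono Set.Ioo_subset_Icc_self)
    exact this.deriv_of_isOpen isOpen_Ioo (by norm_num)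
  have hQderiv : ∀ r ∈ Set.Ioo (0:ℝ) R,
      HasDerivAt Q (r ^ (m + 1) * ((deriv u r) ^ 2 + lam * (u r) ^ 2)) r := by
    intro r hr
    have hrpos : (0:ℝ) < r := hr.1
    have hne : r ≠ 0 := hrpos.ne'
    have hmemIcc : Set.Icc (0:ℝ) R ∈ nhds r := Icc_mem_nhds hr.1 hr.2
    have hdu : HasDerivAt u (deriv u r) r :=
      (((hu.differentiableOn (by norm_num)).differentiableAt hmemIcc)).hasDerivAt
    have hddu : HasDerivAt (deriv u) (deriv (deriv u) r) r :=
      ((hderiv2.differentiableOn (by norm_num)).differentiableAt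
        (isOpen_Ioo.mem_nhds hr)).hasDerivAt
    have hgeq : g =ᶠ[nhds r] deriv u :=
      Filter.eventually_of_mem (isOpen_Ioo.mem_nhds hr) (fun y hy => hgIoo y hy)
    have hg' : HasDerivAt g (deriv (deriv u) r) r := hddu.congr_of_eventuallyEq hgeq
    set A := u r with hA
    set B := deriv u r with hB
    set C := deriv (deriv u) r with hC
    have hgr : g r = B := hgIoo r hr
    -- build the derivative
    have h1 : HasDerivAt (fun x => x ^ (m + 2) * (g x) ^ 2)
        ((↑(m+2) : ℝ) * r ^ (m + 1) * B ^ 2 + r ^ (m + 2) * (2 * B ^ 1 * C)) r := by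
      have := (hasDerivAt_pow (m + 2) r).fun_mul (hg'.fun_pow 2)
      simpa [hgr] using this
    have h2 : HasDerivAt (fun x => ((m : ℝ) + 1) * x ^ (m + 1) * u x * g x)
        ((((m : ℝ) + 1) * ((↑(m+1) : ℝ) * r ^ m) * A + ((m : ℝ) + 1) * r ^ (m + 1) * B) * B
          + ((m : ℝ) + 1) * r ^ (m + 1) * A * C) r := by
      have := (((hasDerivAt_pow (m + 1) r).const_mul ((m : ℝ) + 1)).fun_mul hdu).fun_mul hg'
      simpa [hgr, mul_comm, mul_assoc, mul_left_comm] using this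
    have h3 : HasDerivAt (fun x => lam * x ^ (m + 2) * (u x) ^ 2)
        (lam * ((↑(m+2) : ℝ) * r ^ (m + 1)) * A ^ 2 + lam * r ^ (m + 2) * (2 * A ^ 1 * B)) r := by
      have := ((hasDerivAt_pow (m + 2) r).const_mul lam).fun_mul (hdu.fun_pow 2)
      simpa [mul_comm, mul_assoc, mul_left_comm] using this
    have hsum := (h1.add h2).add h3
    have hCval : r * C = -(((m : ℝ) + 1) * B) - lam * (r * A) := by
      have h := hode r hr
      have : C + ((m : ℝ) + 2 - 1) / r * B + lam * A = 0 := by push_cast at h ⊢; linarith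
      field_simp at this
      linarith
    have hEq : ((↑(m+2) : ℝ) * r ^ (m + 1) * B ^ 2 + r ^ (m + 2) * (2 * B ^ 1 * C))
        + ((((m : ℝ) + 1) * ((↑(m+1) : ℝ) * r ^ m) * A + ((m : ℝ) + 1) * r ^ (m + 1) * B) * B
          + ((m : ℝ) + 1) * r ^ (m + 1) * A * C)
        + (lam * ((↑(m+2) : ℝ) * r ^ (m + 1)) * A ^ 2 + lam * r ^ (m + 2) * (2 * A ^ 1 * B))
        = r ^ (m + 1) * (B ^ 2 + lam * A ^ 2) := by
      push_cast
      linear_combination (2 * r ^ (m + 1) * B + ((m : ℝ) + 1) * r ^ m * A) * hCval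
    rw [hEq] at hsum
    exact hsum
  -- strict monotonicity
  have hmono : StrictMonoOn Q (Set.Icc 0 R) := by
    apply strictMonoOn_of_deriv_pos (convex_Icc 0 R) hQcont
    intro r hr
    rw [interior_Icc] at hr
    rw [(hQderiv r hr).deriv]
    have hu0 : 0 < u r := hpos r (Set.Ioo_subset_Icc_self hr)
    have : 0 < lam * (u r) ^ 2 := by positivity
    have hp : 0 < r ^ (m + 1) := pow_pos hr.1 _
    nlinarith [sq_nonneg (deriv u r)]
  have hQ0 : Q 0 = 0 := by
    simp [hQdef, zero_pow (by omega : m + 2 ≠ 0), zero_pow (by omega : m + 1 ≠ 0)]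
  have hQR : 0 < Q R := by
    have := hmono (Set.left_mem_Icc.2 hR.le) hRmem hR
    rwa [hQ0] at this
  have hQRval : Q R = R ^ (m + 2) * (u R) ^ 2 *
      (lam ^ 2 * σ ^ 2 + ((↑(m+2) : ℝ) - 1) / R * (lam * σ) + lam) := by
    simp only [hQdef, hgR, hbc]
    push_cast
    field_simp
    ring
  have hP : 0 < R ^ (m + 2) * (u R) ^ 2 := by positivity
  have hT : 0 < lam ^ 2 * σ ^ 2 + ((↑(m+2) : ℝ) - 1) / R * (lam * σ) + lam := by
    by_contra hcon
    push_neg at hcon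
    rw [hQRval] at hQR
    nlinarith
  refine ⟨by push_cast at hT ⊢; linarith, ?_⟩
  have hX : 0 < 1 + ((↑(m+2) : ℝ) - 1) * σ / R + lam * σ ^ 2 := by
    have hlx : lam * (1 + ((↑(m+2) : ℝ) - 1) * σ / R + lam * σ ^ 2)
        = lam ^ 2 * σ ^ 2 + ((↑(m+2) : ℝ) - 1) / R * (lam * σ) + lam := by ring
    nlinarith
  push_cast at hX ⊢
  have := mul_pos (mul_pos hlam huR) hX
  linarith
end

section
/- Let n ≥ 2, R > 0, λ < 0 and σ < 0 (so that λσ > 0). Suppose u ∈ C²([0,R]) is strictly positive on [0,R] and satisfies the radial eigenvalue equation u''(r) + ((n−1)/r) u'(r) + λ u(r) = 0 on (0,R), with u'(0) = 0 and the boundary condition u'(R) = λσ u(R). Then λ²σ² + ((n−1)/R) λσ + λ < 0; equivalently, k(R) := λ u(R)(1 + (n−1)σ/R + λσ²) < 0. -/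
/-!
STATEMENT 14 (Lemma `kr`, case λ = λ₋₁ < 0): Let n ≥ 2, R > 0, λ < 0, σ < 0 (so
λσ > 0).  If u ∈ C²([0,R]) is strictly positive on [0,R], solves
u'' + ((n−1)/r) u' + λu = 0 on (0,R) with u'(0) = 0 and u'(R) = λσ u(R), then
λ²σ² + ((n−1)/R)·λσ + λ < 0; equivalently k(R) = λ u(R)(1 + (n−1)σ/R + λσ²) < 0.
-/

private lemma cast_mul_pow_pred (m : ℕ) (r : ℝ) (hr : r ≠ 0) :
    (m : ℝ) * r ^ (m - 1) = (m : ℝ) * r ^ m / r := by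
  cases m with
  | zero => simp
  | succ k =>
      simp only [Nat.add_sub_cancel, pow_succ]
      field_simp

theorem radial_eigenfunction_kR_neg (n : ℕ) (hn : 2 ≤ n)
    (R lam σ : ℝ) (hR : 0 < R) (hlam : lam < 0) (hσ : σ < 0)
    (u : ℝ → ℝ) (hu : ContDiffOn ℝ 2 u (Set.Icc 0 R))
    (hpos : ∀ r ∈ Set.Icc (0 : ℝ) R, 0 < u r)
    (hode : ∀ r ∈ Set.Ioo (0 : ℝ) R,
      deriv (deriv u) r + ((n : ℝ) - 1) / r * deriv u r + lam * u r = 0)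
    (h0 : deriv u 0 = 0)
    (hbc : deriv u R = lam * σ * u R) :
    lam ^ 2 * σ ^ 2 + ((n : ℝ) - 1) / R * (lam * σ) + lam < 0 ∧
    lam * u R * (1 + ((n : ℝ) - 1) * σ / R + lam * σ ^ 2) < 0 := by
  set s : Set ℝ := Set.Icc 0 R with hs_def
  have hsU : UniqueDiffOn ℝ s := uniqueDiffOn_Icc hR
  set v : ℝ → ℝ := derivWithin u s with hv_def
  have hv1 : ContDiffOn ℝ 1 v s := hu.derivWithin hsU (by norm_num)
  have h0s : (0 : ℝ) ∈ s := ⟨le_rfl, hR.le⟩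
  have hRs : R ∈ s := ⟨hR.le, le_rfl⟩
  -- basic facts on the open interval
  have hmemnhds : ∀ r ∈ Set.Ioo (0 : ℝ) R, s ∈ nhds r := fun r hr =>
    Icc_mem_nhds hr.1 hr.2
  have hveq : ∀ r ∈ Set.Ioo (0 : ℝ) R, v r = deriv u r := fun r hr =>
    derivWithin_of_mem_nhds (hmemnhds r hr)
  have hvdiff : ∀ r ∈ Set.Ioo (0 : ℝ) R, DifferentiableAt ℝ v r := fun r hr =>
    (hv1.differentiableOn one_ne_zero).differentiableAt (hmemnhds r hr)
  have hu_r : ∀ r ∈ Set.Ioo (0 : ℝ) R, HasDerivAt u (v r) r := by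
    intro r hr
    have h := ((hu.differentiableOn (by norm_num)).differentiableAt
      (hmemnhds r hr)).hasDerivAt
    rwa [← hveq r hr] at h
  have hvderiv : ∀ r ∈ Set.Ioo (0 : ℝ) R,
      deriv v r = -(((n : ℝ) - 1) / r * v r + lam * u r) := by
    intro r hr
    have hE : v =ᶠ[nhds r] deriv u :=
      Filter.eventuallyEq_of_mem (Ioo_mem_nhds hr.1 hr.2) (fun y hy => hveq y hy)
    have h1 : deriv v r = deriv (deriv u) r := hE.deriv_eq
    have h2 := hode r hr
    rw [h1, ← hveq r hr] at *
    linarith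
  have hn1 : (1 : ℝ) ≤ (n : ℝ) - 1 := by
    have : (2 : ℝ) ≤ (n : ℝ) := by exact_mod_cast hn
    linarith
  have hcast1 : ((n - 1 : ℕ) : ℝ) = (n : ℝ) - 1 := by
    push_cast [Nat.cast_sub (by omega : 1 ≤ n)]; ring
  have hcast2 : ((n - 2 : ℕ) : ℝ) = (n : ℝ) - 2 := by
    push_cast [Nat.cast_sub (by omega : 2 ≤ n)]; ring
  have hexp1 : n - 1 - 1 = n - 2 := by omega
  have hexp2 : n - 2 + 1 = n - 1 := by omega
  -- the function w r = r^(n-1) * v r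
  set w : ℝ → ℝ := fun r => r ^ (n - 1) * v r with hw_def
  have hwcont : ContinuousOn w s := (continuous_pow (n - 1)).continuousOn.mul
    hv1.continuousOn
  have hwderiv : ∀ r ∈ Set.Ioo (0 : ℝ) R,
      HasDerivAt w (-(lam * r ^ (n - 1) * u r)) r := by
    intro r hr
    have hrne : r ≠ 0 := ne_of_gt hr.1
    have hv_r : HasDerivAt v (deriv v r) r := (hvdiff r hr).hasDerivAt
    have h := (hasDerivAt_pow (n - 1) r).mul hv_r
    have hval : (((n - 1 : ℕ) : ℝ) * r ^ (n - 1 - 1)) * v r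
        + r ^ (n - 1) * deriv v r = -(lam * r ^ (n - 1) * u r) := by
      rw [hvderiv r hr, hexp1, hcast1]
      have hpow : r ^ (n - 1) = r ^ (n - 2) * r := by
        rw [← pow_succ, hexp2]
      rw [hpow]
      field_simp
      ring
    rwa [hval] at h
  have hwmono : StrictMonoOn w s := by
    apply strictMonoOn_of_deriv_pos (convex_Icc 0 R) hwcont
    intro r hr
    rw [interior_Icc] at hr
    rw [(hwderiv r hr).deriv]
    have h1 : 0 < r ^ (n - 1) := pow_pos hr.1 _
    have h2 : 0 < u r := hpos r ⟨hr.1.le, hr.2.le⟩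
    have h3 : lam * r ^ (n - 1) * u r < 0 :=
      mul_neg_of_neg_of_pos (mul_neg_of_neg_of_pos hlam h1) h2
    linarith
  have hw0 : w 0 = 0 := by
    simp only [hw_def]
    rw [zero_pow (by omega : n - 1 ≠ 0), zero_mul]
  have hvpos : ∀ r ∈ Set.Ioo (0 : ℝ) R, 0 < v r := by
    intro r hr
    have hwr := hwmono h0s ⟨hr.1.le, hr.2.le⟩ hr.1
    rw [hw0] at hwr
    have hwr' : 0 < r ^ (n - 1) * v r := hwr
    have h1 : 0 < r ^ (n - 1) := pow_pos hr.1 _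
    by_contra hc
    push_neg at hc
    nlinarith [mul_nonneg h1.le (neg_nonneg.2 hc)]
  -- derivWithin w s 0 = 0, giving the key boundary fact
  haveI hNB : (nhdsWithin (0 : ℝ) (Set.Ioo 0 R)).NeBot := by
    rw [← mem_closure_iff_nhdsWithin_neBot, closure_Ioo hR.ne]
    exact ⟨le_rfl, hR.le⟩
  have hwC1 : ContDiffOn ℝ 1 w s :=
    ((contDiff_id.pow (n - 1)).contDiffOn).mul hv1
  have hwdC : ContinuousOn (derivWithin w s) s :=
    hwC1.continuousOn_derivWithin hsU le_rfl
  have hdw0 : derivWithin w s 0 = 0 := by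
    have hT1 : Filter.Tendsto (derivWithin w s) (nhdsWithin 0 (Set.Ioo 0 R))
        (nhds (derivWithin w s 0)) :=
      ((hwdC 0 h0s).tendsto).mono_left (nhdsWithin_mono 0 Set.Ioo_subset_Icc_self)
    have hgc : ContinuousOn (fun r : ℝ => -(lam * r ^ (n - 1) * u r)) s := by
      apply ContinuousOn.neg
      exact (continuousOn_const.mul (continuous_pow (n - 1)).continuousOn).mul
        hu.continuousOn
    have hT2 : Filter.Tendsto (derivWithin w s) (nhdsWithin 0 (Set.Ioo 0 R))
        (nhds (-(lam * (0 : ℝ) ^ (n - 1) * u 0))) := by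
      apply Filter.Tendsto.congr' _
        (((hgc 0 h0s).tendsto).mono_left (nhdsWithin_mono 0 Set.Ioo_subset_Icc_self))
      filter_upwards [self_mem_nhdsWithin] with y hy
      rw [derivWithin_of_mem_nhds (hmemnhds y hy), (hwderiv y hy).deriv]
    have := tendsto_nhds_unique hT1 hT2
    rw [this, zero_pow (by omega : n - 1 ≠ 0)]
    ring
  have hkey : ((n - 1 : ℕ) : ℝ) * (0 : ℝ) ^ (n - 2) * v 0 = 0 := by
    have hv0 : HasDerivWithinAt v (derivWithin v s 0) s 0 :=
      ((hv1.differentiableOn one_ne_zero) 0 h0s).hasDerivWithinAt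
    have hp : HasDerivWithinAt (fun x : ℝ => x ^ (n - 1))
        (((n - 1 : ℕ) : ℝ) * (0 : ℝ) ^ (n - 1 - 1)) s 0 :=
      (hasDerivAt_pow (n - 1) 0).hasDerivWithinAt
    have hprod := hp.mul hv0
    have this : derivWithin w s 0 = _ := hprod.derivWithin (hsU 0 h0s)
    rw [hdw0] at this
    rw [zero_pow (by omega : n - 1 ≠ 0), zero_mul, add_zero] at this
    rw [hexp1] at this
    linarith [this]
  -- the function G
  set G : ℝ → ℝ := fun r => r ^ (n - 1) * ((v r) ^ 2 + lam * (u r) ^ 2)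
    + ((n : ℝ) - 1) * r ^ (n - 2) * (v r * u r) with hG_def
  have hGcont : ContinuousOn G s := by
    apply ContinuousOn.add
    · exact (continuous_pow (n - 1)).continuousOn.mul
        ((hv1.continuousOn.pow 2).add (continuousOn_const.mul (hu.continuousOn.pow 2)))
    · exact (continuousOn_const.mul (continuous_pow (n - 2)).continuousOn).mul
        (hv1.continuousOn.mul hu.continuousOn)
  have hG0 : G 0 = 0 := by
    simp only [hG_def]
    rw [zero_pow (by omega : n - 1 ≠ 0)]
    have : ((n : ℝ) - 1) * (0 : ℝ) ^ (n - 2) * (v 0 * u 0)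
        = (((n - 1 : ℕ) : ℝ) * (0 : ℝ) ^ (n - 2) * v 0) * u 0 := by
      rw [hcast1]; ring
    rw [this, hkey]
    ring
  have hGderiv : ∀ r ∈ Set.Ioo (0 : ℝ) R, deriv G r < 0 := by
    intro r hr
    have hrne : r ≠ 0 := ne_of_gt hr.1
    have hv_r : HasDerivAt v (deriv v r) r := (hvdiff r hr).hasDerivAt
    have hur : HasDerivAt u (v r) r := hu_r r hr
    have h1 := (hasDerivAt_pow (n - 1) r).mul
      ((hv_r.pow 2).add ((hur.pow 2).const_mul lam))
    have h2 := ((hasDerivAt_pow (n - 2) r).const_mul ((n : ℝ) - 1)).mul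
      (hv_r.mul hur)
    have hupos : 0 < u r := hpos r ⟨hr.1.le, hr.2.le⟩
    have hvr : 0 < v r := hvpos r hr
    have hpowpos : 0 < r ^ (n - 2) := pow_pos hr.1 _
    have hpow : r ^ (n - 1) = r ^ (n - 2) * r := by rw [← pow_succ, hexp2]
    have hpred : ((n - 2 : ℕ) : ℝ) * r ^ (n - 2 - 1)
        = ((n - 2 : ℕ) : ℝ) * r ^ (n - 2) / r := cast_mul_pow_pred (n - 2) r hrne
    have hd : HasDerivAt G (-(((n : ℝ) - 1) * r ^ (n - 2) * v r * u r / r)) r := by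
      have h12 := h1.add h2
      rw [hG_def]
      refine h12.congr_deriv ?_
      rw [hvderiv r hr, hexp1, hpred, hpow]
      push_cast [hcast1, hcast2, Pi.add_apply, Pi.mul_apply, Pi.pow_apply]
      field_simp
      ring
    rw [hd.deriv]
    have hnum : 0 < ((n : ℝ) - 1) * r ^ (n - 2) * v r * u r / r := by
      apply div_pos _ hr.1
      have : (0:ℝ) < (n : ℝ) - 1 := by linarith
      positivity
    linarith
  have hGanti : StrictAntiOn G s := by
    apply strictAntiOn_of_deriv_neg (convex_Icc 0 R) hGcont
    intro r hr
    rw [interior_Icc] at hr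
    exact hGderiv r hr
  have hGR : G R < 0 := by
    have := hGanti h0s hRs hR
    rwa [hG0] at this
  -- translate the boundary condition
  have hdiffR : DifferentiableAt ℝ u R := by
    by_contra h
    rw [deriv_zero_of_not_differentiableAt h] at hbc
    have h1 : 0 < lam * σ * u R :=
      mul_pos (mul_pos_of_neg_of_neg hlam hσ) (hpos R hRs)
    linarith
  have hvR : v R = lam * σ * u R := by
    rw [hv_def, hdiffR.derivWithin (hsU R hRs), hbc]
  have huR : 0 < u R := hpos R hRs
  have hpowR : 0 < R ^ (n - 1) := pow_pos hR _
  have hpowRR : R ^ (n - 1) = R ^ (n - 2) * R := by rw [← pow_succ, hexp2]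
  have hmain : lam ^ 2 * σ ^ 2 + ((n : ℝ) - 1) / R * (lam * σ) + lam < 0 := by
    have hkeyeq : (lam ^ 2 * σ ^ 2 + ((n : ℝ) - 1) / R * (lam * σ) + lam)
        * (R ^ (n - 1) * (u R) ^ 2) = G R := by
      simp only [hG_def]
      rw [hvR, hpowRR]
      field_simp
      ring
    by_contra hcon
    push_neg at hcon
    have hP : 0 < R ^ (n - 1) * u R ^ 2 := by positivity
    have h4 : (0:ℝ) ≤ G R := hkeyeq ▸ mul_nonneg hcon hP.le
    linarith
  refine ⟨hmain, ?_⟩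
  have heq : lam * u R * (1 + ((n : ℝ) - 1) * σ / R + lam * σ ^ 2)
      = u R * (lam ^ 2 * σ ^ 2 + ((n : ℝ) - 1) / R * (lam * σ) + lam) := by
    field_simp
    ring
  rw [heq]
  exact mul_neg_of_pos_of_neg huR hmain
end
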